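/- Let d ≥ 2 and d' ≥ 2 be integers and let G be a partial geometry pg(s,t,α) with parameters s = d(d'−1), t = d'(d−1), α = (d−1)(d'−1). Then G is isomorphic to a partial geometry arising via the Thas–Wallis construction from a maximal arc of degree d in some projective plane of order q = dd' if and only if both of the following hold: (i) G admits a set of d(dd'−d'+1) pairwise orthogonal parallel classes of lines, and (ii) the dual geometry G' admits a set of d'(dd'−d+1) pairwise orthogonal parallel classes of lines. -/

import Mathlib

/-!
If `G` is the Thas–Wallis geometry of a maximal arc `A`, the pencils of the points of `A` are
pairwise orthogonal parallel classes of `G`, and the point rows of the lines missing `A` are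
pairwise orthogonal parallel classes of the dual; counting secants gives their numbers.

Conversely, let `C` and `C'` be the given families. Double counting flags and pairs of classes
shows that `∑ₗ (nₗ - d)² = 0`, where `nₗ` is the number of classes of `C` containing the line
`l`; so every line lies in exactly `d` classes, and the classes through `l` then exhaust the lines
disjoint from `l`. Adjoining the classes of `C` as new points and those of `C'` as new lines
therefore yields a projective plane of order `dd'`, in which the new points form a maximal arc of
degree `d` whose Thas–Wallis geometry is `G`.
-/

/-- A partial geometry `pg(s,t,α)`: a finite incidence structure of points `P`
and lines `L` (with incidence relation `I`) such that
(1) two distinct points are on at most one common line,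
(2) every line has exactly `s+1` points (`s ≥ 1`),
(3) every point is on exactly `t+1` lines (`t ≥ 1`),
(4) for every non-incident point-line pair `(p, l)` there are exactly `a ≥ 1`
lines through `p` meeting `l`. -/
def IsPartialGeometry {P L : Type*} (I : P → L → Prop) (s t a : ℕ) : Prop :=
  Finite P ∧ Finite L ∧ 1 ≤ s ∧ 1 ≤ t ∧ 1 ≤ a ∧
  (∀ p q : P, p ≠ q → {l : L | I p l ∧ I q l}.ncard ≤ 1) ∧
  (∀ l : L, {p : P | I p l}.ncard = s + 1) ∧
  (∀ p : P, {l : L | I p l}.ncard = t + 1) ∧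
  (∀ (p : P) (l : L), ¬ I p l →
    {m : L | I p m ∧ ∃ q : P, I q m ∧ I q l}.ncard = a)

/-- A parallel class of an incidence structure: a set of pairwise disjoint
lines that covers the point set. -/
def IsParallelClass {P L : Type*} (I : P → L → Prop) (c : Set L) : Prop :=
  (∀ p : P, ∃ l ∈ c, I p l) ∧
  (∀ l ∈ c, ∀ m ∈ c, l ≠ m → ∀ p : P, ¬ (I p l ∧ I p m))

/-- A (finite) projective plane of order `q`: any two distinct points are on
exactly one common line, any two distinct lines meet in exactly one point,
every line has exactly `q+1` points and every point is on exactly `q+1`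
lines. -/
def IsProjectivePlane {X Λ : Type*} (I : X → Λ → Prop) (q : ℕ) : Prop :=
  Finite X ∧ Finite Λ ∧
  (∀ x y : X, x ≠ y → {l : Λ | I x l ∧ I y l}.ncard = 1) ∧
  (∀ l m : Λ, l ≠ m → {x : X | I x l ∧ I x m}.ncard = 1) ∧
  (∀ l : Λ, {x : X | I x l}.ncard = q + 1) ∧
  (∀ x : X, {l : Λ | I x l}.ncard = q + 1)

/-- A maximal arc of degree `d` in a projective plane of order `q`: a set `A`
of `dq - q + d` points such that every line is either disjoint from `A` or
meets `A` in exactly `d` points. -/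
def IsMaximalArc {X Λ : Type*} (I : X → Λ → Prop) (q d : ℕ) (A : Set X) : Prop :=
  A.ncard = d * q - q + d ∧
  ∀ l : Λ, (∀ x ∈ A, ¬ I x l) ∨ {x ∈ A | I x l}.ncard = d

/-- Points of the Thas–Wallis partial geometry arising from a maximal arc `A`:
the points of the plane not in `A`. -/
abbrev TWpoints {X : Type*} (A : Set X) : Type _ := {x : X // x ∉ A}

/-- Lines of the Thas–Wallis partial geometry arising from a maximal arc `A`:
the lines of the plane meeting `A`. -/
abbrev TWlines {X Λ : Type*} (I : X → Λ → Prop) (A : Set X) : Type _ :=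
  {l : Λ // ∃ x ∈ A, I x l}

/-- Incidence in the Thas–Wallis partial geometry: inherited from the plane. -/
abbrev TWinc {X Λ : Type*} (I : X → Λ → Prop) (A : Set X) :
    TWpoints A → TWlines I A → Prop :=
  fun p l => I p.1 l.1

theorem Set.ncard_mul_eq_ncard_mul {α β : Type*} {S : Set α} {T : Set β} (hS : S.Finite)
    (hT : T.Finite) (r : α → β → Prop) {m n : ℕ}
    (hm : ∀ a ∈ S, {b ∈ T | r a b}.ncard = m) (hn : ∀ b ∈ T, {a ∈ S | r a b}.ncard = n) :
    S.ncard * m = T.ncard * n := by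
  classical
  lift S to Finset α using hS
  lift T to Finset β using hT
  simp only [Set.ncard_coe_finset]
  refine Finset.card_mul_eq_card_mul r (fun a ha => ?_) (fun b hb => ?_)
  · rw [← hm a ha, ← Set.ncard_coe_finset, Finset.coe_bipartiteAbove]; rfl
  · rw [← hn b hb, ← Set.ncard_coe_finset, Finset.coe_bipartiteBelow]; rfl

theorem Set.ncard_setOf_eq_one_iff {α : Type*} {p : α → Prop} :
    {a | p a}.ncard = 1 ↔ ∃! a, p a := by
  rw [Set.ncard_eq_one]
  constructor
  · rintro ⟨a, ha⟩
    exact ⟨a, (Set.eq_singleton_iff_unique_mem.1 ha).1, (Set.eq_singleton_iff_unique_mem.1 ha).2⟩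
  · rintro ⟨a, ha, hu⟩
    exact ⟨a, Set.eq_singleton_iff_unique_mem.2 ⟨ha, hu⟩⟩

theorem Set.ncard_eq_ncard_preimage_inl_add {α β : Type*} [Finite α] [Finite β]
    (s : Set (α ⊕ β)) : s.ncard = (Sum.inl ⁻¹' s).ncard + (Sum.inr ⁻¹' s).ncard := by
  conv_lhs => rw [← Set.image_preimage_inl_union_image_preimage_inr s]
  rw [Set.ncard_union_eq Set.disjoint_image_inl_image_inr (Set.toFinite _) (Set.toFinite _),
    Set.ncard_image_of_injective _ Sum.inl_injective,
    Set.ncard_image_of_injective _ Sum.inr_injective]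

theorem Set.ncard_setOf_subtype {α : Type*} {s : Set α} (p : α → Prop) :
    {x : s | p x}.ncard = {x ∈ s | p x}.ncard := by
  change {x : s | (x : α) ∈ {x | p x}}.ncard = _
  rw [Set.ncard_subtype, Set.inter_comm]
  rfl

theorem nonempty_of_one_lt_ncard {L : Type*} {C : Set (Set L)} (hC : 1 < C.ncard) :
    Nonempty L := by
  obtain ⟨c, c', -, -, hcc'⟩ := (Set.one_lt_ncard_iff (Set.finite_of_ncard_pos (by omega))).1 hC
  by_contra hL
  rw [not_nonempty_iff] at hL
  exact hcc' (c.eq_empty_of_isEmpty.trans c'.eq_empty_of_isEmpty.symm)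

section FamiliesOfSets

variable {L : Type*} [Fintype L] {C : Set (Set L)} {w : ℕ}

theorem sum_ncard_sep_mem (hsize : ∀ c ∈ C, c.ncard = w) :
    ∑ l, {c ∈ C | l ∈ c}.ncard = C.ncard * w := by
  classical
  have hdc := Finset.sum_card_bipartiteAbove_eq_sum_card_bipartiteBelow
    (s := Finset.univ) (t := C.toFinset) (r := fun l c => l ∈ c)
  simp only [← Set.ncard_coe_finset, Finset.coe_bipartiteAbove, Finset.coe_bipartiteBelow,
    Set.mem_toFinset, Finset.mem_univ, true_and, Set.ofPred_mem_eq] at hdc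
  rw [hdc, Finset.sum_congr rfl fun c hc => hsize c (Set.mem_toFinset.1 hc), Finset.sum_const,
    smul_eq_mul, Set.ncard_eq_toFinset_card']

theorem sum_ncard_sep_mem_sq (hsize : ∀ c ∈ C, c.ncard = w)
    (horth : ∀ c ∈ C, ∀ c' ∈ C, c ≠ c' → (c ∩ c').ncard = 1) :
    ∑ l, {c ∈ C | l ∈ c}.ncard ^ 2 + C.ncard = C.ncard * C.ncard + C.ncard * w := by
  classical
  have hdc := Finset.sum_card_bipartiteAbove_eq_sum_card_bipartiteBelow
    (s := Finset.univ) (t := C.toFinset ×ˢ C.toFinset) (r := fun l cc => l ∈ cc.1 ∧ l ∈ cc.2)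
  simp only [← Set.ncard_coe_finset, Finset.coe_bipartiteAbove, Finset.coe_bipartiteBelow,
    Finset.mem_product, Set.mem_toFinset, Finset.mem_univ, true_and] at hdc
  have hpairs : ∀ l, {c ∈ C | l ∈ c}.ncard ^ 2
      = {cc : Set L × Set L | (cc.1 ∈ C ∧ cc.2 ∈ C) ∧ l ∈ cc.1 ∧ l ∈ cc.2}.ncard := by
    intro l
    rw [sq, ← Set.ncard_prod]
    congr 1
    ext cc
    exact and_and_and_comm
  have hrow : ∀ c ∈ C.toFinset, ∑ c' ∈ C.toFinset, (c ∩ c').ncard + 1 = w + C.ncard := by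
    intro c hc
    rw [Set.mem_toFinset] at hc
    rw [← Finset.add_sum_erase _ _ (Set.mem_toFinset.2 hc), Set.inter_self, hsize c hc,
      Finset.sum_congr rfl fun c' hc' => horth c hc c' (Set.mem_toFinset.1
        (Finset.mem_of_mem_erase hc')) (Finset.ne_of_mem_erase hc').symm,
      Finset.sum_const, smul_eq_mul, mul_one, add_assoc,
      Finset.card_erase_add_one (Set.mem_toFinset.2 hc), ← Set.ncard_eq_toFinset_card']
  calc ∑ l, {c ∈ C | l ∈ c}.ncard ^ 2 + C.ncard
      = ∑ c ∈ C.toFinset, (∑ c' ∈ C.toFinset, (c ∩ c').ncard + 1) := by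
        simp_rw [hpairs, hdc, Finset.sum_product, Finset.sum_add_distrib, Finset.sum_const,
          smul_eq_mul, mul_one, ← Set.ncard_eq_toFinset_card']
        rfl
    _ = C.ncard * C.ncard + C.ncard * w := by
        rw [Finset.sum_congr rfl hrow, Finset.sum_const, smul_eq_mul,
          ← Set.ncard_eq_toFinset_card']
        ring

/-- `hcount` is `∑ₗ (nₗ - r)² = 0` for `nₗ = #{c ∈ C | l ∈ c}`, expanded by the two sums above. -/
theorem ncard_sep_mem_eq_of_pairwise_ncard_inter_eq_one {r : ℕ}
    (hsize : ∀ c ∈ C, c.ncard = w) (horth : ∀ c ∈ C, ∀ c' ∈ C, c ≠ c' → (c ∩ c').ncard = 1)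
    (hcount : C.ncard * C.ncard + C.ncard * w + r * r * Fintype.card L
      = C.ncard + 2 * r * (C.ncard * w)) (l : L) :
    {c ∈ C | l ∈ c}.ncard = r := by
  have hvar : ∑ l, (({c ∈ C | l ∈ c}.ncard : ℤ) - r) ^ 2 = 0 := by
    have h₁ : ∑ l, ({c ∈ C | l ∈ c}.ncard : ℤ) = C.ncard * w := by
      exact_mod_cast sum_ncard_sep_mem hsize
    have h₂ : ∑ l, ({c ∈ C | l ∈ c}.ncard : ℤ) ^ 2 + C.ncard = C.ncard * C.ncard + C.ncard * w := by
      exact_mod_cast sum_ncard_sep_mem_sq hsize horth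
    have h₃ : (C.ncard : ℤ) * C.ncard + C.ncard * w + r * r * Fintype.card L
        = C.ncard + 2 * r * (C.ncard * w) := by
      exact_mod_cast hcount
    simp_rw [sub_sq, Finset.sum_add_distrib, Finset.sum_sub_distrib, ← Finset.sum_mul,
      ← Finset.mul_sum, Finset.sum_const, Finset.card_univ, nsmul_eq_mul]
    linear_combination h₂ - 2 * r * h₁ + h₃
  have hl := (Finset.sum_eq_zero_iff_of_nonneg fun l _ => sq_nonneg _).1 hvar l (Finset.mem_univ l)
  have := pow_eq_zero_iff two_ne_zero |>.1 hl
  omega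

end FamiliesOfSets

section OrthogonalParallelClasses

variable {P L : Type*} {I : P → L → Prop}

def IsOrthogonalParallelFamily (I : P → L → Prop) (C : Set (Set L)) : Prop :=
  (∀ c ∈ C, IsParallelClass I c) ∧ ∀ c ∈ C, ∀ c' ∈ C, c ≠ c' → (c ∩ c').ncard = 1

def HasOrthogonalParallelClasses (I : P → L → Prop) (n : ℕ) : Prop :=
  ∃ C : Set (Set L), C.ncard = n ∧ IsOrthogonalParallelFamily I C

theorem IsParallelClass.existsUnique {c : Set L} (hc : IsParallelClass I c) (p : P) :
    ∃! l, l ∈ c ∧ I p l := by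
  obtain ⟨l, hlc, hpl⟩ := hc.1 p
  exact ⟨l, ⟨hlc, hpl⟩, fun m ⟨hmc, hpm⟩ => by_contra fun hml => hc.2 m hmc l hlc hml p ⟨hpm, hpl⟩⟩

namespace IsOrthogonalParallelFamily

variable {C : Set (Set L)}

theorem existsUnique_mem_inter (hC : IsOrthogonalParallelFamily I C) {c c' : Set L} (hc : c ∈ C)
    (hc' : c' ∈ C) (hne : c ≠ c') : ∃! l, l ∈ c ∧ l ∈ c' :=
  Set.ncard_setOf_eq_one_iff.1 (hC.2 c hc c' hc' hne)

theorem eq_of_mem_of_mem (hC : IsOrthogonalParallelFamily I C) {c c' : Set L} (hc : c ∈ C)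
    (hc' : c' ∈ C) {l m : L} (hlm : l ≠ m) (hl : l ∈ c ∧ l ∈ c') (hm : m ∈ c ∧ m ∈ c') :
    c = c' :=
  by_contra fun hne => hlm ((hC.existsUnique_mem_inter hc hc' hne).unique hl hm)

end IsOrthogonalParallelFamily

theorem HasOrthogonalParallelClasses.of_equiv {P L P' L' : Type*} {I : P → L → Prop}
    {I' : P' → L' → Prop} (e : P ≃ P') (e' : L ≃ L') (he : ∀ p l, I p l ↔ I' (e p) (e' l))
    {n : ℕ} (h : HasOrthogonalParallelClasses I' n) : HasOrthogonalParallelClasses I n := by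
  obtain ⟨C, hn, hpar, horth⟩ := h
  have hinj : Function.Injective (Set.preimage e') := Set.preimage_injective.2 e'.surjective
  refine ⟨Set.preimage e' '' C, by rw [Set.ncard_image_of_injective _ hinj, hn], ?_, ?_⟩
  · rintro _ ⟨c, hc, rfl⟩
    refine ⟨fun p => ?_, fun l hl m hm hlm p ⟨hpl, hpm⟩ => ?_⟩
    · obtain ⟨l', hl'c, hpl'⟩ := (hpar c hc).1 (e p)
      exact ⟨e'.symm l', by simpa using hl'c, by simpa [he] using hpl'⟩
    · exact (hpar c hc).2 _ hl _ hm (e'.injective.ne hlm) (e p) ⟨(he p l).1 hpl, (he p m).1 hpm⟩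
  · rintro _ ⟨c, hc, rfl⟩ _ ⟨c', hc', rfl⟩ hne
    rw [← Set.preimage_inter, Set.ncard_preimage_of_injective_subset_range e'.injective
      (by simp), horth c hc c' hc' fun h => hne (h ▸ rfl)]

end OrthogonalParallelClasses

namespace IsPartialGeometry

variable {P L : Type*} {I : P → L → Prop} {s t a q r r' : ℕ} {C : Set (Set L)}
  {C' : Set (Set P)}

theorem finite_points (h : IsPartialGeometry I s t a) : Finite P := h.1

theorem finite_lines (h : IsPartialGeometry I s t a) : Finite L := h.2.1

theorem ncard_points_on (h : IsPartialGeometry I s t a) (l : L) : {p | I p l}.ncard = s + 1 :=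
  h.2.2.2.2.2.2.1 l

theorem ncard_lines_through (h : IsPartialGeometry I s t a) (p : P) :
    {l | I p l}.ncard = t + 1 :=
  h.2.2.2.2.2.2.2.1 p

theorem eq_or_eq (h : IsPartialGeometry I s t a) {p p' : P} {l l' : L} (hpl : I p l)
    (hp'l : I p' l) (hpl' : I p l') (hp'l' : I p' l') : p = p' ∨ l = l' := by
  have := h.finite_lines
  refine or_iff_not_imp_left.2 fun hne => ?_
  exact (Set.ncard_le_one_iff (Set.toFinite _)).1 (h.2.2.2.2.2.1 p p' hne) ⟨hpl, hp'l⟩ ⟨hpl', hp'l'⟩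

theorem ncard_points_on_collinear (h : IsPartialGeometry I s t a) {p : P} {l : L}
    (hpl : ¬ I p l) :
    {x : P | I x l ∧ ∃ n, I x n ∧ I p n}.ncard = a := by
  have := h.finite_points
  have := h.finite_lines
  have hx := Set.ncard_mul_eq_ncard_mul (Set.toFinite {m : L | I p m ∧ ∃ x, I x m ∧ I x l})
    (Set.toFinite {x : P | I x l ∧ ∃ n, I x n ∧ I p n}) (fun m x => I x m) (m := 1) (n := 1) ?_ ?_
  · simpa [h.2.2.2.2.2.2.2.2 p l hpl] using hx.symm
  · rintro m ⟨hpm, x, hxm, hxl⟩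
    refine Set.ncard_setOf_eq_one_iff.2 ⟨x, ⟨⟨hxl, m, hxm, hpm⟩, hxm⟩, ?_⟩
    rintro y ⟨⟨hyl, -⟩, hym⟩
    exact (h.eq_or_eq hym hxm hyl hxl).resolve_right fun hml => hpl (hml ▸ hpm)
  · rintro x ⟨hxl, n, hxn, hpn⟩
    refine Set.ncard_setOf_eq_one_iff.2 ⟨n, ⟨⟨hpn, x, hxn, hxl⟩, hxn⟩, ?_⟩
    rintro m ⟨⟨hpm, -⟩, hxm⟩
    exact (h.eq_or_eq hpm hxm hpn hxn).resolve_left fun hpx => hpl (hpx ▸ hxl)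

protected theorem flip (h : IsPartialGeometry I s t a) : IsPartialGeometry (flip I) t s a := by
  have ⟨hP, hL, hs, ht, ha, _, hline, hpoint, _⟩ := h
  refine ⟨hL, hP, ht, hs, ha, fun l l' hll' => ?_, hpoint, hline,
    fun l p hpl => h.ncard_points_on_collinear hpl⟩
  refine (Set.ncard_le_one_iff (Set.toFinite _)).2 fun hp hp' => ?_
  exact (h.eq_or_eq hp.1 hp'.1 hp.2 hp'.2).resolve_right hll'

theorem ncard_lines_through_ne (h : IsPartialGeometry I s t a) {x : P} {l : L} (hxl : I x l) :
    {n : L | I x n ∧ n ≠ l}.ncard = t := by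
  change ({n | I x n} \ {l} : Set L).ncard = t
  rw [Set.ncard_sdiff_singleton_of_mem (show l ∈ {n | I x n} from hxl), h.ncard_lines_through,
    Nat.add_sub_cancel]

theorem ncard_lines_meeting (h : IsPartialGeometry I s t a) (l : L) :
    {m : L | m ≠ l ∧ ∃ x, I x m ∧ I x l}.ncard = (s + 1) * t := by
  have := h.finite_points
  have := h.finite_lines
  have key := Set.ncard_mul_eq_ncard_mul (Set.toFinite {m : L | m ≠ l ∧ ∃ x, I x m ∧ I x l})
    (Set.toFinite {x | I x l}) (fun m x => I x m) (m := 1) (n := t) ?_ ?_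
  · rwa [mul_one, h.ncard_points_on] at key
  · rintro m ⟨hml, x, hxm, hxl⟩
    refine Set.ncard_setOf_eq_one_iff.2 ⟨x, ⟨hxl, hxm⟩, fun y ⟨hyl, hym⟩ => ?_⟩
    exact (h.eq_or_eq hym hxm hyl hxl).resolve_right hml
  · intro x hxl
    rw [← h.ncard_lines_through_ne hxl]
    congr 1
    ext n
    exact ⟨fun ⟨⟨hnl, _⟩, hxn⟩ => ⟨hxn, hnl⟩, fun ⟨hxn, hnl⟩ => ⟨⟨hnl, x, hxn, hxl⟩, hxn⟩⟩

theorem ncard_collinear_off_line (h : IsPartialGeometry I s t a) {x : P} {l : L} (hxl : I x l) :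
    {p : P | ¬ I p l ∧ ∃ n, I x n ∧ I p n}.ncard = t * s := by
  have := h.finite_points
  have := h.finite_lines
  rw [← h.ncard_lines_through_ne hxl]
  have key := Set.ncard_mul_eq_ncard_mul (Set.toFinite {p : P | ¬ I p l ∧ ∃ n, I x n ∧ I p n})
    (Set.toFinite {n | I x n ∧ n ≠ l}) (fun p n => I p n) (m := 1) (n := s) ?_ ?_
  · rwa [mul_one] at key
  · rintro p ⟨hpl, n, hxn, hpn⟩
    refine Set.ncard_setOf_eq_one_iff.2 ⟨n, ⟨⟨hxn, fun hnl => hpl (hnl ▸ hpn)⟩, hpn⟩, ?_⟩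
    rintro n' ⟨⟨hxn', -⟩, hpn'⟩
    exact (h.eq_or_eq hxn' hpn' hxn hpn).resolve_left fun hxp => hpl (hxp ▸ hxl)
  · rintro n ⟨hxn, hnl⟩
    have hpts : {p | (¬ I p l ∧ ∃ n', I x n' ∧ I p n') ∧ I p n} = {p | I p n} \ {x} := by
      ext p
      refine ⟨fun ⟨⟨hpl, _⟩, hpn⟩ => ⟨hpn, fun hpx => hpl (hpx ▸ hxl)⟩, fun ⟨hpn, hpx⟩ => ?_⟩
      exact ⟨⟨fun hpl => hpx ((h.eq_or_eq hpn hxn hpl hxl).resolve_right hnl), n, hxn, hpn⟩, hpn⟩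
    rw [Set.sep_ofPred, hpts, Set.ncard_sdiff_singleton_of_mem (show x ∈ {p | I p n} from hxn),
      h.ncard_points_on, Nat.add_sub_cancel]

theorem ncard_not_incident_mul (h : IsPartialGeometry I s t a) (l : L) :
    {p : P | ¬ I p l}.ncard * a = (s + 1) * (t * s) := by
  have := h.finite_points
  rw [← h.ncard_points_on l]
  refine Set.ncard_mul_eq_ncard_mul (Set.toFinite _) (Set.toFinite _)
    (fun p x => ∃ n, I x n ∧ I p n) (fun p hpl => ?_) (fun x hxl => ?_)
  · exact h.ncard_points_on_collinear hpl
  · exact h.ncard_collinear_off_line hxl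

theorem nat_card_points [Nonempty L] (h : IsPartialGeometry I s t a) (hq : t * s = q * a) :
    Nat.card P = (s + 1) * (q + 1) := by
  have := h.finite_points
  let l := Classical.arbitrary L
  have hoff : {p : P | ¬ I p l}.ncard = (s + 1) * q := by
    refine Nat.eq_of_mul_eq_mul_right h.2.2.2.2.1 ?_
    rw [h.ncard_not_incident_mul, hq, mul_assoc]
  rw [← Set.ncard_add_ncard_compl {p : P | I p l}, h.ncard_points_on]
  change s + 1 + {p : P | ¬ I p l}.ncard = _
  rw [hoff]
  ring

theorem ncard_mul_of_isParallelClass (h : IsPartialGeometry I s t a) {c : Set L}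
    (hc : IsParallelClass I c) : c.ncard * (s + 1) = Nat.card P := by
  have := h.finite_points
  have := h.finite_lines
  rw [← Set.ncard_univ, ← mul_one (Set.univ : Set P).ncard]
  refine Set.ncard_mul_eq_ncard_mul (Set.toFinite _) (Set.toFinite _) (fun l p => I p l)
    (fun l _ => ?_) (fun p _ => ?_)
  · simpa using h.ncard_points_on l
  · obtain ⟨l, hlc, hpl⟩ := hc.1 p
    refine Set.ncard_setOf_eq_one_iff.2 ⟨l, ⟨hlc, hpl⟩, fun m ⟨hmc, hpm⟩ => ?_⟩
    by_contra hml
    exact hc.2 m hmc l hlc hml p ⟨hpm, hpl⟩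

theorem nonempty_points_of_nonempty_lines [Nonempty L] (h : IsPartialGeometry I s t a) :
    Nonempty P := by
  have hl := h.ncard_points_on (Classical.arbitrary L)
  obtain ⟨p, -⟩ := Set.nonempty_of_ncard_ne_zero (s := {p | I p (Classical.arbitrary L)}) (by omega)
  exact ⟨p⟩

/-- The classes through `l` contain `r * w` distinct lines other than `l`, all disjoint from `l`;
by `hb` these are all the lines disjoint from `l`. -/
theorem exists_mem_of_disjoint {w : ℕ} (h : IsPartialGeometry I s t a)
    (hC : IsOrthogonalParallelFamily I C)
    (hsize : ∀ c ∈ C, c.ncard = w + 1) (hreg : ∀ l, {c ∈ C | l ∈ c}.ncard = r)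
    (hb : Nat.card L = 1 + (s + 1) * t + r * w) {l m : L} (hlm : l ≠ m)
    (hdisj : ∀ p, ¬ (I p l ∧ I p m)) : ∃ c ∈ C, l ∈ c ∧ m ∈ c := by
  have := h.finite_lines
  let D : Set L := {l}ᶜ \ {m | ∃ x, I x m ∧ I x l}
  let T : Set L := ⋃ c ∈ {c ∈ C | l ∈ c}, c \ {l}
  have hD : D.ncard = r * w := by
    have hsplit := Set.ncard_inter_add_ncard_sdiff_eq_ncard ({l}ᶜ : Set L) {m | ∃ x, I x m ∧ I x l}
    rw [Set.ncard_compl, Set.ncard_singleton, hb] at hsplit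
    have hM : ({l}ᶜ ∩ {m | ∃ x, I x m ∧ I x l} : Set L).ncard = (s + 1) * t :=
      h.ncard_lines_meeting l
    change (_ \ _ : Set L).ncard = r * w
    omega
  have hT : T.ncard = r * w := by
    have hdisjoint : {c ∈ C | l ∈ c}.PairwiseDisjoint fun c => c \ {l} := by
      rintro c ⟨hcC, hlc⟩ c' ⟨hc'C, hlc'⟩ hne
      refine Set.disjoint_left.2 fun n ⟨hnc, hnl⟩ ⟨hnc', _⟩ => hne ?_
      exact hC.eq_of_mem_of_mem hcC hc'C (Ne.symm hnl) ⟨hlc, hlc'⟩ ⟨hnc, hnc'⟩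
    rw [(Set.toFinite _).ncard_biUnion (fun _ _ => Set.toFinite _) hdisjoint, ← hreg l,
      ← finsum_one, mul_comm, mul_finsum_mem]
    refine finsum_mem_congr rfl fun c ⟨hcC, hlc⟩ => ?_
    rw [Set.ncard_sdiff_singleton_of_mem hlc, hsize c hcC, mul_one, Nat.add_sub_cancel]
  have hTD : T ⊆ D := by
    simp only [T, D, Set.subset_def, Set.mem_iUnion]
    rintro n ⟨c, ⟨hcC, hlc⟩, hnc, hnl⟩
    refine ⟨hnl, fun ⟨x, hxn, hxl⟩ => (hC.1 c hcC).2 n hnc l hlc hnl x ⟨hxn, hxl⟩⟩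
  have hmT : m ∈ T := by
    rw [Set.eq_of_subset_of_ncard_le hTD (hD.trans hT.symm).le]
    exact ⟨hlm.symm, fun ⟨x, hxm, hxl⟩ => hdisj x ⟨hxl, hxm⟩⟩
  simp only [T, Set.mem_iUnion] at hmT
  obtain ⟨c, ⟨hcC, hlc⟩, hmc, -⟩ := hmT
  exact ⟨c, hcC, hlc, hmc⟩

theorem ncard_of_isParallelClass [Nonempty L] (h : IsPartialGeometry I s t a)
    (hq : t * s = q * a) {c : Set L} (hc : IsParallelClass I c) : c.ncard = q + 1 := by
  have hP := h.ncard_mul_of_isParallelClass hc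
  rw [h.nat_card_points hq, mul_comm (s + 1)] at hP
  exact Nat.eq_of_mul_eq_mul_right (Nat.succ_pos s) hP

theorem nat_card_lines [Nonempty P] (h : IsPartialGeometry I s t a) (hq : t * s = q * a) :
    Nat.card L = (t + 1) * (q + 1) :=
  h.flip.nat_card_points (by rwa [mul_comm])

theorem ncard_sep_mem_of_orthogonal [Nonempty P] (h : IsPartialGeometry I s t a)
    (hq : t * s = q * a) (hr : r * t + q = r * q) (hC : IsOrthogonalParallelFamily I C)
    (hK : C.ncard = r * (t + 1)) (l : L) : {c ∈ C | l ∈ c}.ncard = r := by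
  have : Nonempty L := ⟨l⟩
  have := h.finite_lines
  have := Fintype.ofFinite L
  refine ncard_sep_mem_eq_of_pairwise_ncard_inter_eq_one
    (fun c hc => h.ncard_of_isParallelClass hq (hC.1 c hc)) hC.2 ?_ l
  rw [← Nat.card_eq_fintype_card, h.nat_card_lines hq, hK]
  zify at hr ⊢
  linear_combination (r * (t + 1) : ℤ) * hr

theorem exists_mem_of_disjoint_of_orthogonal [Nonempty P] (h : IsPartialGeometry I s t a)
    (hq : t * s = q * a) (hr : r * t + q = r * q) (hs : s + r = q)
    (hC : IsOrthogonalParallelFamily I C) (hK : C.ncard = r * (t + 1)) {l m : L} (hlm : l ≠ m)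
    (hdisj : ∀ p, ¬ (I p l ∧ I p m)) : ∃ c ∈ C, l ∈ c ∧ m ∈ c := by
  have : Nonempty L := ⟨l⟩
  refine h.exists_mem_of_disjoint hC (fun c hc => h.ncard_of_isParallelClass hq (hC.1 c hc))
    (h.ncard_sep_mem_of_orthogonal hq hr hC hK) ?_ hlm hdisj
  rw [h.nat_card_lines hq]
  zify at hr hs ⊢
  linear_combination hr - (t : ℤ) * hs

end IsPartialGeometry

section Completion

variable {P L : Type*} {I : P → L → Prop} {C : Set (Set L)} {C' : Set (Set P)}

def completionInc (I : P → L → Prop) (C : Set (Set L)) (C' : Set (Set P)) :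
    P ⊕ C → L ⊕ C' → Prop
  | .inl p, .inl l => I p l
  | .inl p, .inr c' => p ∈ c'.1
  | .inr c, .inl l => l ∈ c.1
  | .inr _, .inr _ => False

theorem flip_completionInc : flip (completionInc I C C') = completionInc (flip I) C' C := by
  funext x y
  cases x <;> cases y <;> rfl

theorem existsUnique_completionInc_inl_inr (hC : ∀ c ∈ C, IsParallelClass I c) (p : P) (c : C) :
    ∃! m, completionInc I C C' (.inl p) m ∧ completionInc I C C' (.inr c) m := by
  obtain ⟨l, ⟨hlc, hpl⟩, hu⟩ := (hC c c.2).existsUnique p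
  refine ⟨.inl l, ⟨hpl, hlc⟩, ?_⟩
  rintro (l' | c') ⟨h₁, h₂⟩
  · exact congrArg Sum.inl (hu l' ⟨h₂, h₁⟩)
  · exact h₂.elim

theorem existsUnique_completionInc_inr_inr (hC : IsOrthogonalParallelFamily I C) {c c' : C}
    (hne : c ≠ c') :
    ∃! m, completionInc I C C' (.inr c) m ∧ completionInc I C C' (.inr c') m := by
  obtain ⟨l, hl, hu⟩ := hC.existsUnique_mem_inter c.2 c'.2 (Subtype.coe_ne_coe.2 hne)
  refine ⟨.inl l, hl, ?_⟩
  rintro (l' | c'') ⟨h₁, h₂⟩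
  · exact congrArg Sum.inl (hu l' ⟨h₁, h₂⟩)
  · exact h₁.elim

theorem existsUnique_completionInc_inl_inl
    (hI : ∀ {p p' : P} {l l' : L}, I p l → I p' l → I p l' → I p' l' → p = p' ∨ l = l')
    (hC' : IsOrthogonalParallelFamily (flip I) C')
    (hcover' : ∀ {p p' : P}, p ≠ p' → (∀ l, ¬ (I p l ∧ I p' l)) → ∃ c ∈ C', p ∈ c ∧ p' ∈ c)
    {p p' : P} (hpp' : p ≠ p') :
    ∃! m, completionInc I C C' (.inl p) m ∧ completionInc I C C' (.inl p') m := by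
  by_cases hcol : ∃ l, I p l ∧ I p' l
  · obtain ⟨l, hpl, hp'l⟩ := hcol
    refine ⟨.inl l, ⟨hpl, hp'l⟩, ?_⟩
    rintro (l' | c') ⟨h₁, h₂⟩
    · exact congrArg Sum.inl ((hI h₁ h₂ hpl hp'l).resolve_left hpp')
    · exact ((hC'.1 c' c'.2).2 p h₁ p' h₂ hpp' l ⟨hpl, hp'l⟩).elim
  · obtain ⟨c', hc', hpc', hp'c'⟩ := hcover' hpp' fun l hl => hcol ⟨l, hl⟩
    refine ⟨.inr ⟨c', hc'⟩, ⟨hpc', hp'c'⟩, ?_⟩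
    rintro (l | c'') ⟨h₁, h₂⟩
    · exact (hcol ⟨l, h₁, h₂⟩).elim
    · exact congrArg Sum.inr (Subtype.ext
        (hC'.eq_of_mem_of_mem c''.2 hc' hpp' ⟨h₁, hpc'⟩ ⟨h₂, hp'c'⟩))

theorem ncard_completionInc_common_eq_one
    (hI : ∀ {p p' : P} {l l' : L}, I p l → I p' l → I p l' → I p' l' → p = p' ∨ l = l')
    (hC : IsOrthogonalParallelFamily I C) (hC' : IsOrthogonalParallelFamily (flip I) C')
    (hcover' : ∀ {p p' : P}, p ≠ p' → (∀ l, ¬ (I p l ∧ I p' l)) → ∃ c ∈ C', p ∈ c ∧ p' ∈ c)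
    {x y : P ⊕ C} (hxy : x ≠ y) :
    {m | completionInc I C C' x m ∧ completionInc I C C' y m}.ncard = 1 := by
  refine Set.ncard_setOf_eq_one_iff.2 ?_
  rcases x with p | c <;> rcases y with p' | c'
  · exact existsUnique_completionInc_inl_inl hI hC' hcover' fun h => hxy (congrArg _ h)
  · exact existsUnique_completionInc_inl_inr hC.1 p c'
  · simpa only [and_comm] using existsUnique_completionInc_inl_inr hC.1 p' c
  · exact existsUnique_completionInc_inr_inr hC fun h => hxy (congrArg _ h)

theorem ncard_setOf_completionInc_inl [Finite P] [Finite L] (l : L) :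
    {x | completionInc I C C' x (.inl l)}.ncard = {p | I p l}.ncard + {c ∈ C | l ∈ c}.ncard := by
  rw [Set.ncard_eq_ncard_preimage_inl_add]
  exact congrArg _ (Set.ncard_setOf_subtype (s := C) (l ∈ ·))

theorem ncard_setOf_completionInc_inr [Finite P] [Finite L] (c' : C') :
    {x | completionInc I C C' x (.inr c')}.ncard = c'.1.ncard := by
  have hnone : Sum.inr ⁻¹' {x | completionInc I C C' x (.inr c')} = ∅ :=
    Set.eq_empty_of_forall_notMem fun _ h => h
  rw [Set.ncard_eq_ncard_preimage_inl_add, hnone, Set.ncard_empty, add_zero]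
  rfl

theorem isProjectivePlane_completionInc [Finite P] [Finite L] {q : ℕ}
    (hI : ∀ {p p' : P} {l l' : L}, I p l → I p' l → I p l' → I p' l' → p = p' ∨ l = l')
    (hC : IsOrthogonalParallelFamily I C) (hC' : IsOrthogonalParallelFamily (flip I) C')
    (hcover : ∀ {l l' : L}, l ≠ l' → (∀ p, ¬ (I p l ∧ I p l')) → ∃ c ∈ C, l ∈ c ∧ l' ∈ c)
    (hcover' : ∀ {p p' : P}, p ≠ p' → (∀ l, ¬ (I p l ∧ I p' l)) → ∃ c ∈ C', p ∈ c ∧ p' ∈ c)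
    (hline : ∀ l, {p | I p l}.ncard + {c ∈ C | l ∈ c}.ncard = q + 1)
    (hpoint : ∀ p, {l | I p l}.ncard + {c ∈ C' | p ∈ c}.ncard = q + 1)
    (hsize : ∀ c ∈ C, c.ncard = q + 1) (hsize' : ∀ c ∈ C', c.ncard = q + 1) :
    IsProjectivePlane (completionInc I C C') q := by
  have hflip := flip_completionInc (I := I) (C := C) (C' := C')
  have hI' : ∀ {l l' : L} {p p' : P}, I p l → I p l' → I p' l → I p' l' → l = l' ∨ p = p' :=
    fun h₁ h₂ h₃ h₄ => (hI h₁ h₃ h₂ h₄).symm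
  refine ⟨inferInstance, inferInstance,
    fun x y hxy => ncard_completionInc_common_eq_one hI hC hC' hcover' hxy, fun m m' hmm' => ?_,
    ?_, ?_⟩
  · rw [← ncard_completionInc_common_eq_one hI' hC' hC hcover hmm', ← hflip]
    rfl
  · rintro (l | c')
    · rw [ncard_setOf_completionInc_inl, hline]
    · rw [ncard_setOf_completionInc_inr, hsize' _ c'.2]
  · rintro (p | c)
    · have := ncard_setOf_completionInc_inl (I := flip I) (C := C') (C' := C) p
      rw [← hflip] at this
      exact this.trans (hpoint p)
    · have := ncard_setOf_completionInc_inr (I := flip I) (C := C') (C' := C) c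
      rw [← hflip] at this
      exact this.trans (hsize _ c.2)

theorem isMaximalArc_range_inr {q r : ℕ} (hK : C.ncard = r * q - q + r)
    (hreg : ∀ l, {c ∈ C | l ∈ c}.ncard = r) :
    IsMaximalArc (completionInc I C C') q r (Set.range Sum.inr) := by
  refine ⟨?_, ?_⟩
  · rw [← Set.image_univ, Set.ncard_image_of_injective _ Sum.inr_injective, Set.ncard_univ,
      Nat.card_coe_set_eq, hK]
  · rintro (l | c')
    · right
      have harc : {x ∈ Set.range Sum.inr | completionInc I C C' x (.inl l)}
          = Sum.inr '' {c : C | l ∈ (c : Set L)} := by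
        ext (p | c) <;> simp [completionInc]
      rw [harc, Set.ncard_image_of_injective _ Sum.inr_injective,
        Set.ncard_setOf_subtype (s := C) (l ∈ ·), hreg]
    · exact .inl fun x ⟨c, hc⟩ => hc ▸ id

theorem exists_equiv_completionInc (hmem : ∀ l, ∃ c ∈ C, l ∈ c) :
    ∃ (f : P ≃ TWpoints (Set.range (Sum.inr : C → P ⊕ C)))
      (g : L ≃ TWlines (completionInc I C C') (Set.range Sum.inr)),
      ∀ p l, I p l ↔ TWinc _ _ (f p) (g l) := by
  have hf : Function.Bijective fun p : P =>
      (⟨.inl p, by simp⟩ : TWpoints (Set.range (Sum.inr : C → P ⊕ C))) := by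
    refine ⟨fun p p' h => Sum.inl_injective (congrArg Subtype.val h), ?_⟩
    rintro ⟨p | c, hx⟩
    · exact ⟨p, rfl⟩
    · exact (hx ⟨c, rfl⟩).elim
  have hline : ∀ l, ∃ x ∈ Set.range Sum.inr, completionInc I C C' x (.inl l) := fun l =>
    let ⟨c, hc, hlc⟩ := hmem l
    ⟨.inr ⟨c, hc⟩, ⟨_, rfl⟩, hlc⟩
  have hg : Function.Bijective fun l : L =>
      (⟨.inl l, hline l⟩ : TWlines (completionInc I C C') (Set.range Sum.inr)) := by
    refine ⟨fun l l' h => Sum.inl_injective (congrArg Subtype.val h), ?_⟩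
    rintro ⟨l | c', hm⟩
    · exact ⟨l, rfl⟩
    · obtain ⟨_, ⟨c, rfl⟩, hcc'⟩ := hm
      exact hcc'.elim
  exact ⟨.ofBijective _ hf, .ofBijective _ hg, fun _ _ => Iff.rfl⟩

end Completion

universe u

namespace IsPartialGeometry

variable {P L : Type*} {I : P → L → Prop} {s t a q r r' : ℕ} {C : Set (Set L)}
  {C' : Set (Set P)}

theorem isProjectivePlane_completionInc [Nonempty L] (h : IsPartialGeometry I s t a)
    (hq : t * s = q * a) (hr : r * t + q = r * q) (hs : s + r = q) (hr' : r' * s + q = r' * q)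
    (ht : t + r' = q) (hC : IsOrthogonalParallelFamily I C) (hK : C.ncard = r * (t + 1))
    (hC' : IsOrthogonalParallelFamily (flip I) C') (hK' : C'.ncard = r' * (s + 1)) :
    IsProjectivePlane (completionInc I C C') q := by
  have := h.finite_points
  have := h.finite_lines
  have := h.nonempty_points_of_nonempty_lines
  have hq' : s * t = q * a := by rwa [mul_comm]
  refine _root_.isProjectivePlane_completionInc h.eq_or_eq hC hC'
    (h.exists_mem_of_disjoint_of_orthogonal hq hr hs hC hK)
    (fun hpp' hdisj => h.flip.exists_mem_of_disjoint_of_orthogonal hq' hr' ht hC' hK' hpp' hdisj)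
    (fun l => ?_) (fun p => ?_) (fun c hc => h.ncard_of_isParallelClass hq (hC.1 c hc))
    (fun c hc => h.flip.ncard_of_isParallelClass hq' (hC'.1 c hc))
  · rw [h.ncard_points_on, h.ncard_sep_mem_of_orthogonal hq hr hC hK, ← hs]
    ring
  · rw [h.ncard_lines_through, h.flip.ncard_sep_mem_of_orthogonal hq' hr' hC' hK', ← ht]
    ring

end IsPartialGeometry

theorem IsPartialGeometry.exists_thasWallis_of_orthogonal {P L : Type u} {I : P → L → Prop}
    {d d' : ℕ} (hd : 2 ≤ d) (hd' : 2 ≤ d')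
    (hG : IsPartialGeometry I (d * (d' - 1)) (d' * (d - 1)) ((d - 1) * (d' - 1)))
    (hC : HasOrthogonalParallelClasses I (d * (d * d' - d' + 1)))
    (hC' : HasOrthogonalParallelClasses (flip I) (d' * (d * d' - d + 1))) :
    ∃ (X Λ : Type u) (J : X → Λ → Prop) (A : Set X),
      IsProjectivePlane J (d * d') ∧ IsMaximalArc J (d * d') d A ∧
      ∃ (f : P ≃ TWpoints A) (g : L ≃ TWlines J A),
        ∀ (p : P) (l : L), I p l ↔ TWinc J A (f p) (g l) := by
  obtain ⟨C, hK, hC⟩ := hC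
  obtain ⟨C', hK', hC'⟩ := hC'
  have h₁ : 1 ≤ d := by omega
  have h₁' : 1 ≤ d' := by omega
  have hdq : d ≤ d * d' := Nat.le_mul_of_pos_right d (by omega)
  have hd'q : d' ≤ d * d' := Nat.le_mul_of_pos_left d' (by omega)
  have hqdq : d * d' ≤ d * (d * d') := Nat.le_mul_of_pos_left _ (by omega)
  have : Nonempty L := nonempty_of_one_lt_ncard (C := C) (by rw [hK]; nlinarith)
  have := hG.nonempty_points_of_nonempty_lines
  have hq : d' * (d - 1) * (d * (d' - 1)) = d * d' * ((d - 1) * (d' - 1)) := by ring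
  have hr : d * (d' * (d - 1)) + d * d' = d * (d * d') := by zify [h₁]; ring
  have hs : d * (d' - 1) + d = d * d' := by zify [h₁']; ring
  have hr' : d' * (d * (d' - 1)) + d * d' = d' * (d * d') := by zify [h₁']; ring
  have ht : d' * (d - 1) + d' = d * d' := by zify [h₁]; ring
  have hKt : C.ncard = d * (d' * (d - 1) + 1) := by rw [hK]; zify [h₁, hd'q]; ring
  have hKs : C'.ncard = d' * (d * (d' - 1) + 1) := by rw [hK']; zify [h₁', hdq]; ring
  have hKarc : C.ncard = d * (d * d') - d * d' + d := by rw [hK]; zify [hd'q, hqdq]; ring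
  have hreg := hG.ncard_sep_mem_of_orthogonal hq hr hC hKt
  have hmem : ∀ l, ∃ c ∈ C, l ∈ c := fun l =>
    Set.nonempty_of_ncard_ne_zero (s := {c ∈ C | l ∈ c}) (by rw [hreg l]; omega)
  exact ⟨P ⊕ C, L ⊕ C', completionInc I C C', Set.range Sum.inr,
    hG.isProjectivePlane_completionInc hq hr hs hr' ht hC hKt hC' hKs,
    isMaximalArc_range_inr hKarc hreg, exists_equiv_completionInc hmem⟩

namespace IsProjectivePlane

variable {X Λ : Type*} {J : X → Λ → Prop} {q : ℕ}

protected theorem flip (hJ : IsProjectivePlane J q) : IsProjectivePlane (flip J) q :=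
  ⟨hJ.2.1, hJ.1, hJ.2.2.2.1, hJ.2.2.1, hJ.2.2.2.2.2, hJ.2.2.2.2.1⟩

theorem existsUnique_line (hJ : IsProjectivePlane J q) {x y : X} (hxy : x ≠ y) :
    ∃! m, J x m ∧ J y m :=
  Set.ncard_setOf_eq_one_iff.1 (hJ.2.2.1 x y hxy)

theorem existsUnique_point (hJ : IsProjectivePlane J q) {m m' : Λ} (hmm' : m ≠ m') :
    ∃! x, J x m ∧ J x m' :=
  hJ.flip.existsUnique_line hmm'

theorem exists_two_lines (hJ : IsProjectivePlane J q) (hq : 0 < q) (x : X) :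
    ∃ m m', m ≠ m' ∧ J x m ∧ J x m' := by
  have := hJ.2.1
  obtain ⟨m, m', hm, hm', hne⟩ :=
    (Set.one_lt_ncard_iff (Set.toFinite {m | J x m})).1 (by rw [hJ.2.2.2.2.2 x]; omega)
  exact ⟨m, m', hne, hm, hm'⟩

theorem nat_card_lines (hJ : IsProjectivePlane J q) (l : Λ) : Nat.card Λ = q * q + q + 1 := by
  have := hJ.1
  have := hJ.2.1
  have hother : ({l}ᶜ : Set Λ).ncard * 1 = {x | J x l}.ncard * q := by
    refine Set.ncard_mul_eq_ncard_mul (Set.toFinite _) (Set.toFinite _) (fun m x => J x m)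
      (fun m hm => by simpa only [and_comm, Set.mem_ofPred_eq] using hJ.2.2.2.1 l m (Ne.symm hm))
      (fun x hx => ?_)
    have hlines : {m | m ∈ ({l}ᶜ : Set Λ) ∧ J x m} = {m | J x m} \ {l} := by
      ext
      exact and_comm
    rw [hlines, Set.ncard_sdiff_singleton_of_mem (show l ∈ {m | J x m} from hx), hJ.2.2.2.2.2 x,
      Nat.add_sub_cancel]
  rw [mul_one, hJ.2.2.2.2.1 l] at hother
  rw [← Set.ncard_add_ncard_compl {l}, hother, Set.ncard_singleton]
  ring

end IsProjectivePlane

section ThasWallis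

variable {X Λ : Type*} {J : X → Λ → Prop} {q : ℕ} {A : Set X}

def twPencil (J : X → Λ → Prop) (A : Set X) (x : X) : Set (TWlines J A) := {l | J x l.1}

def twRow (J : X → Λ → Prop) (A : Set X) (m : Λ) : Set (TWpoints A) := {p | J p.1 m}

def exteriorLines (J : X → Λ → Prop) (A : Set X) : Set Λ := {m | ∀ x ∈ A, ¬ J x m}

theorem isParallelClass_twPencil (hJ : IsProjectivePlane J q) {x : X} (hx : x ∈ A) :
    IsParallelClass (TWinc J A) (twPencil J A x) := by
  refine ⟨fun p => ?_, fun l hl l' hl' hne p ⟨hpl, hpl'⟩ => hne ?_⟩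
  · have hxp : x ≠ p.1 := fun h => p.2 (h ▸ hx)
    obtain ⟨m, ⟨hxm, hpm⟩, -⟩ := hJ.existsUnique_line hxp
    exact ⟨⟨m, x, hx, hxm⟩, hxm, hpm⟩
  · have hxp : x ≠ p.1 := fun h => p.2 (h ▸ hx)
    exact Subtype.ext ((hJ.existsUnique_line hxp).unique ⟨hl, hpl⟩ ⟨hl', hpl'⟩)

theorem ncard_twPencil_inter (hJ : IsProjectivePlane J q) {x y : X} (hx : x ∈ A)
    (hxy : x ≠ y) : (twPencil J A x ∩ twPencil J A y).ncard = 1 := by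
  obtain ⟨m, hm, hu⟩ := hJ.existsUnique_line hxy
  refine Set.ncard_setOf_eq_one_iff.2 ⟨⟨m, x, hx, hm.1⟩, hm, fun l hl => ?_⟩
  exact Subtype.ext (hu l.1 hl)

theorem injOn_twPencil (hJ : IsProjectivePlane J q) (hq : 0 < q) : A.InjOn (twPencil J A) := by
  intro x hx y _ hxy
  by_contra hne
  obtain ⟨m, m', hmm', hxm, hxm'⟩ := hJ.exists_two_lines hq x
  have hy : ∀ {m}, J x m → J y m := fun {m} hxm =>
    (show (⟨m, x, hx, hxm⟩ : TWlines J A) ∈ twPencil J A y from hxy ▸ hxm)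
  exact hmm' ((hJ.existsUnique_line hne).unique ⟨hxm, hy hxm⟩ ⟨hxm', hy hxm'⟩)

theorem hasOrthogonalParallelClasses_twInc (hJ : IsProjectivePlane J q) (hq : 0 < q) :
    HasOrthogonalParallelClasses (TWinc J A) A.ncard := by
  refine ⟨twPencil J A '' A, (injOn_twPencil hJ hq).ncard_image, ?_, ?_⟩
  · rintro _ ⟨x, hx, rfl⟩
    exact isParallelClass_twPencil hJ hx
  · rintro _ ⟨x, hx, rfl⟩ _ ⟨y, -, rfl⟩ hne
    exact ncard_twPencil_inter hJ hx fun h => hne (h ▸ rfl)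

theorem ne_of_mem_exteriorLines {m : Λ} (hm : m ∈ exteriorLines J A) (l : TWlines J A) :
    l.1 ≠ m := by
  obtain ⟨x, hx, hxl⟩ := l.2
  exact fun h => hm x hx (h ▸ hxl)

theorem isParallelClass_twRow (hJ : IsProjectivePlane J q) {m : Λ}
    (hm : m ∈ exteriorLines J A) : IsParallelClass (flip (TWinc J A)) (twRow J A m) := by
  refine ⟨fun l => ?_, fun p hp p' hp' hne l ⟨hpl, hp'l⟩ => hne ?_⟩
  · obtain ⟨x, ⟨hxl, hxm⟩, -⟩ := hJ.existsUnique_point (ne_of_mem_exteriorLines hm l)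
    exact ⟨⟨x, fun hx => hm x hx hxm⟩, hxm, hxl⟩
  · exact Subtype.ext
      ((hJ.existsUnique_point (ne_of_mem_exteriorLines hm l)).unique ⟨hpl, hp⟩ ⟨hp'l, hp'⟩)

theorem ncard_twRow_inter (hJ : IsProjectivePlane J q) {m m' : Λ}
    (hm : m ∈ exteriorLines J A) (hmm' : m ≠ m') : (twRow J A m ∩ twRow J A m').ncard = 1 := by
  obtain ⟨x, hx, hu⟩ := hJ.existsUnique_point hmm'
  refine Set.ncard_setOf_eq_one_iff.2 ⟨⟨x, fun h => hm x h hx.1⟩, hx, fun p hp => ?_⟩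
  exact Subtype.ext (hu p.1 hp)

theorem injOn_twRow (hJ : IsProjectivePlane J q) (hq : 0 < q) :
    (exteriorLines J A).InjOn (twRow J A) := by
  intro m hm m' _ hmm'
  by_contra hne
  obtain ⟨x, x', hxx', hxm, hx'm⟩ := hJ.flip.exists_two_lines hq m
  have hm' : ∀ {x}, J x m → J x m' := fun {x} hxm =>
    (show (⟨x, fun h => hm x h hxm⟩ : TWpoints A) ∈ twRow J A m' from hmm' ▸ hxm)
  exact hxx' ((hJ.existsUnique_point hne).unique ⟨hxm, hm' hxm⟩ ⟨hx'm, hm' hx'm⟩)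

theorem hasOrthogonalParallelClasses_flip_twInc (hJ : IsProjectivePlane J q) (hq : 0 < q) :
    HasOrthogonalParallelClasses (flip (TWinc J A)) (exteriorLines J A).ncard := by
  refine ⟨twRow J A '' exteriorLines J A, (injOn_twRow hJ hq).ncard_image, ?_, ?_⟩
  · rintro _ ⟨m, hm, rfl⟩
    exact isParallelClass_twRow hJ hm
  · rintro _ ⟨m, hm, rfl⟩ _ ⟨m', -, rfl⟩ hne
    exact ncard_twRow_inter hJ hm fun h => hne (h ▸ rfl)

end ThasWallis

namespace IsMaximalArc

variable {X Λ : Type*} {J : X → Λ → Prop} {q d : ℕ} {A : Set X}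

theorem ncard_secants_mul (hJ : IsProjectivePlane J q) (hA : IsMaximalArc J q d A) :
    {m | ∃ x ∈ A, J x m}.ncard * d = A.ncard * (q + 1) := by
  have := hJ.1
  have := hJ.2.1
  refine (Set.ncard_mul_eq_ncard_mul (Set.toFinite A) (Set.toFinite {m | ∃ x ∈ A, J x m})
    (fun x m => J x m) (fun x hx => ?_) (fun m ⟨x, hx, hxm⟩ => ?_)).symm
  · rw [← hJ.2.2.2.2.2 x]
    congr 1
    ext m
    exact ⟨fun h => h.2, fun h => ⟨⟨x, hx, h⟩, h⟩⟩
  · exact (hA.2 m).resolve_left fun h => h x hx hxm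

theorem ncard_exteriorLines {d' : ℕ} (hJ : IsProjectivePlane J (d * d'))
    (hA : IsMaximalArc J (d * d') d A) (hd : 0 < d) (hd' : 0 < d') :
    (exteriorLines J A).ncard = d' * (d * d' - d + 1) := by
  have := hJ.2.1
  have hdq : d ≤ d * d' := Nat.le_mul_of_pos_right d hd'
  have hqdq : d * d' ≤ d * (d * d') := Nat.le_mul_of_pos_left _ hd
  obtain ⟨x, hx⟩ : A.Nonempty := Set.nonempty_of_ncard_ne_zero (by rw [hA.1]; omega)
  obtain ⟨m, -⟩ : {m | J x m}.Nonempty :=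
    Set.nonempty_of_ncard_ne_zero (by rw [hJ.2.2.2.2.2 x]; omega)
  have hsplit := Set.ncard_add_ncard_compl {m | ∃ x ∈ A, J x m}
  have hext : {m | ∃ x ∈ A, J x m}ᶜ = exteriorLines J A := by
    ext m
    simp [exteriorLines]
  have hsec := hA.ncard_secants_mul hJ
  rw [hext, hJ.nat_card_lines m] at hsplit
  rw [hA.1] at hsec
  zify [hdq, hqdq] at hsplit hsec ⊢
  refine mul_left_cancel₀ (Int.natCast_ne_zero.2 hd.ne') ?_
  linear_combination (d : ℤ) * hsplit - hsec

end IsMaximalArc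

/-- Characterization theorem: a partial geometry `G` with parameters
`s = d(d'-1)`, `t = d'(d-1)`, `α = (d-1)(d'-1)` (`d, d' ≥ 2`) is isomorphic to
a partial geometry arising via the Thas–Wallis construction from a maximal arc
of degree `d` in some projective plane of order `q = dd'` if and only if
(i) `G` admits a set of `d(dd' - d' + 1)` pairwise orthogonal parallel classes
of lines and (ii) the dual geometry `G'` admits a set of `d'(dd' - d + 1)`
pairwise orthogonal parallel classes of lines. -/
theorem stmt10 {P L : Type u} {I : P → L → Prop} {d d' : ℕ}
    (hd : 2 ≤ d) (hd' : 2 ≤ d')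
    (hG : IsPartialGeometry I (d * (d' - 1)) (d' * (d - 1)) ((d - 1) * (d' - 1))) :
    (∃ (X Λ : Type u) (J : X → Λ → Prop) (A : Set X),
      IsProjectivePlane J (d * d') ∧ IsMaximalArc J (d * d') d A ∧
      ∃ (f : P ≃ TWpoints A) (g : L ≃ TWlines J A),
        ∀ (p : P) (l : L), I p l ↔ TWinc J A (f p) (g l))
    ↔
    ((∃ C : Set (Set L), C.ncard = d * (d * d' - d' + 1) ∧
        (∀ c ∈ C, IsParallelClass I c) ∧
        (∀ c ∈ C, ∀ c' ∈ C, c ≠ c' → (c ∩ c').ncard = 1)) ∧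
     (∃ C' : Set (Set P), C'.ncard = d' * (d * d' - d + 1) ∧
        (∀ c ∈ C', IsParallelClass (fun (l : L) (p : P) => I p l) c) ∧
        (∀ c ∈ C', ∀ c'' ∈ C', c ≠ c'' → (c ∩ c'').ncard = 1))) := by
  refine ⟨fun ⟨X, Λ, J, A, hJ, hA, f, g, hfg⟩ => ⟨?_, ?_⟩,
    fun ⟨hC, hC'⟩ => hG.exists_thasWallis_of_orthogonal hd hd' hC hC'⟩
  · have hpencils := (hasOrthogonalParallelClasses_twInc (A := A) hJ (by positivity)).of_equiv
      f g hfg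
    have hdq : d' ≤ d * d' := Nat.le_mul_of_pos_left d' (by omega)
    have hqdq : d * d' ≤ d * (d * d') := Nat.le_mul_of_pos_left _ (by omega)
    rwa [hA.1, show d * (d * d') - d * d' + d = d * (d * d' - d' + 1) by
      zify [hdq, hqdq]; ring] at hpencils
  · have hrows := (hasOrthogonalParallelClasses_flip_twInc (A := A) hJ (by positivity)).of_equiv
      g f fun l p => hfg p l
    rwa [hA.ncard_exteriorLines hJ (by omega) (by omega)] at hrows
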